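/- arXiv:2511.13896 — 3 statements merged into one kernel-verified Lean document; each statement's English description precedes it below -/
import Mathlib

section
/- Let T>0, p∈(1,∞), α∈(1/p,1), and v∈L^p(0,T;ℝ). Then for 0<t₁<t₂≤T, one has ‖(1/Γ(α))∫₀^{t₁} [(t₁−s)^{α−1} − (t₂−s)^{α−1}] v(s) ds‖ ≤ (1/Γ(α)) ((p−1)/(αp−1))^{1−1/p} (t₂−t₁)^{α−1/p} ‖v‖_{L^p(0,t₁)}. -/
/-!
Since `α - 1 ≤ 0`, the kernel `K s = (t₁ - s) ^ (α - 1) - (t₂ - s) ^ (α - 1)` is nonnegative on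
`(0, t₁)`, and `(b - a) ^ q ≤ b ^ q - a ^ q` (for `q ≥ 1`) gives
`K s ^ q ≤ (t₁ - s) ^ m - (t₂ - s) ^ m` with `q` the conjugate exponent of `p` and
`m = (α - 1) q > -1`.
The right-hand side integrates to `(t₁ ^ (m+1) - t₂ ^ (m+1) + (t₂ - t₁) ^ (m+1)) / (m + 1)`,
which is at most `(t₂ - t₁) ^ (m+1) / (m + 1)`; Hölder's inequality finishes the proof.
-/

open MeasureTheory Set

theorem abs_integral_mul_le_Lp_mul_Lq {X : Type*} [MeasurableSpace X] {μ : Measure X}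
    {p q : ℝ} (hpq : p.HolderConjugate q) {f g : X → ℝ}
    (hf : MemLp f (ENNReal.ofReal p) μ) (hg : MemLp g (ENNReal.ofReal q) μ) :
    |∫ x, f x * g x ∂μ| ≤ (∫ x, |f x| ^ p ∂μ) ^ (1 / p) * (∫ x, |g x| ^ q ∂μ) ^ (1 / q) := by
  have h := integral_mul_norm_le_Lp_mul_Lq hpq hf hg
  simp only [Real.norm_eq_abs] at h
  refine le_trans ?_ h
  simpa only [Real.norm_eq_abs, abs_mul] using norm_integral_le_integral_norm (fun x => f x * g x)

theorem abs_rpow_sub_rpow_rpow_le {x y β q : ℝ} (hx : 0 < x) (hxy : x ≤ y) (hβ : β ≤ 0)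
    (hq : 1 ≤ q) : |x ^ β - y ^ β| ^ q ≤ x ^ (β * q) - y ^ (β * q) := by
  have hy : 0 < y := hx.trans_le hxy
  have hyx : y ^ β ≤ x ^ β := Real.rpow_le_rpow_of_nonpos hx hxy hβ
  have hy0 : 0 ≤ y ^ β := Real.rpow_nonneg hy.le β
  have h := Real.add_rpow_le_rpow_add (sub_nonneg.2 hyx) hy0 hq
  rw [sub_add_cancel] at h
  rw [abs_of_nonneg (sub_nonneg.2 hyx), Real.rpow_mul hx.le, Real.rpow_mul hy.le]
  linarith

section PowerIntegrals

variable {m : ℝ}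

theorem intervalIntegrable_sub_rpow (hm : -1 < m) (c a b : ℝ) :
    IntervalIntegrable (fun s => (c - s) ^ m) volume a b := by
  simpa using
    (intervalIntegral.intervalIntegrable_rpow' (a := c - a) (b := c - b) hm).comp_sub_left c

theorem integral_sub_rpow (hm : -1 < m) (c t : ℝ) :
    ∫ s in (0:ℝ)..t, (c - s) ^ m = (c ^ (m + 1) - (c - t) ^ (m + 1)) / (m + 1) := by
  rw [intervalIntegral.integral_comp_sub_left (fun x => x ^ m) c, integral_rpow (Or.inl hm),
    sub_zero]

theorem integral_sub_rpow_sub_sub_rpow_le (hm : -1 < m) {t₁ t₂ : ℝ} (ht₁ : 0 ≤ t₁)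
    (h12 : t₁ ≤ t₂) :
    ∫ s in (0:ℝ)..t₁, ((t₁ - s) ^ m - (t₂ - s) ^ m) ≤ (t₂ - t₁) ^ (m + 1) / (m + 1) := by
  have hm1 : 0 < m + 1 := by linarith
  have hmono : t₁ ^ (m + 1) ≤ t₂ ^ (m + 1) := Real.rpow_le_rpow ht₁ h12 hm1.le
  rw [intervalIntegral.integral_sub (intervalIntegrable_sub_rpow hm _ _ _)
    (intervalIntegrable_sub_rpow hm _ _ _), integral_sub_rpow hm, integral_sub_rpow hm, sub_self,
    Real.zero_rpow hm1.ne', ← sub_div]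
  gcongr
  linarith

end PowerIntegrals

section Kernel

variable {β q t₁ t₂ : ℝ}

theorem ae_abs_kernel_rpow_le (hβ : β ≤ 0) (hq : 1 ≤ q) (h12 : t₁ ≤ t₂) :
    ∀ᵐ s ∂volume.restrict (Ioo 0 t₁),
      |(t₁ - s) ^ β - (t₂ - s) ^ β| ^ q ≤ (t₁ - s) ^ (β * q) - (t₂ - s) ^ (β * q) := by
  filter_upwards [ae_restrict_mem measurableSet_Ioo] with s hs
  exact abs_rpow_sub_rpow_rpow_le (sub_pos.2 hs.2) (by linarith) hβ hq

theorem integrableOn_sub_rpow_sub_sub_rpow (hβq : -1 < β * q) (ht₁ : 0 ≤ t₁) :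
    IntegrableOn (fun s => (t₁ - s) ^ (β * q) - (t₂ - s) ^ (β * q)) (Ioo 0 t₁) :=
  (intervalIntegrable_iff_integrableOn_Ioo_of_le ht₁).1
    ((intervalIntegrable_sub_rpow hβq _ _ _).sub (intervalIntegrable_sub_rpow hβq _ _ _))

theorem integrableOn_abs_kernel_rpow (hβ : β ≤ 0) (hq : 1 ≤ q) (hβq : -1 < β * q)
    (ht₁ : 0 ≤ t₁) (h12 : t₁ ≤ t₂) :
    IntegrableOn (fun s => |(t₁ - s) ^ β - (t₂ - s) ^ β| ^ q) (Ioo 0 t₁) := by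
  refine (integrableOn_sub_rpow_sub_sub_rpow (t₂ := t₂) hβq ht₁).mono'
    (Measurable.aestronglyMeasurable (by fun_prop)) ?_
  filter_upwards [ae_abs_kernel_rpow_le hβ hq h12] with s hs
  rwa [Real.norm_of_nonneg (by positivity)]

theorem memLp_kernel (hβ : β ≤ 0) (hq : 1 ≤ q) (hβq : -1 < β * q) (ht₁ : 0 ≤ t₁)
    (h12 : t₁ ≤ t₂) :
    MemLp (fun s => (t₁ - s) ^ β - (t₂ - s) ^ β) (ENNReal.ofReal q)
      (volume.restrict (Ioo 0 t₁)) := by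
  have hq0 : 0 < q := one_pos.trans_le hq
  refine (integrable_norm_rpow_iff (Measurable.aestronglyMeasurable (by fun_prop))
    (by simpa using hq0) ENNReal.ofReal_ne_top).1 ?_
  simp only [ENNReal.toReal_ofReal hq0.le, Real.norm_eq_abs]
  exact integrableOn_abs_kernel_rpow hβ hq hβq ht₁ h12

theorem integral_abs_kernel_rpow_le (hβ : β ≤ 0) (hq : 1 ≤ q) (hβq : -1 < β * q)
    (ht₁ : 0 ≤ t₁) (h12 : t₁ ≤ t₂) :
    ∫ s in Ioo 0 t₁, |(t₁ - s) ^ β - (t₂ - s) ^ β| ^ q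
      ≤ (t₂ - t₁) ^ (β * q + 1) / (β * q + 1) := by
  refine (integral_mono_ae (integrableOn_abs_kernel_rpow hβ hq hβq ht₁ h12)
    (integrableOn_sub_rpow_sub_sub_rpow hβq ht₁) (ae_abs_kernel_rpow_le hβ hq h12)).trans ?_
  rw [← integral_Ioc_eq_integral_Ioo, ← intervalIntegral.integral_of_le ht₁]
  exact integral_sub_rpow_sub_sub_rpow_le hβq ht₁ h12

theorem sub_one_mul_conjExponent_add_one {p : ℝ} (hp : 1 < p) (α : ℝ) :
    (α - 1) * (p / (p - 1)) + 1 = (α * p - 1) / (p - 1) := by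
  have hp1 : p - 1 ≠ 0 := (sub_pos.2 hp).ne'
  field_simp
  ring

theorem neg_one_lt_sub_one_mul_conjExponent {p α : ℝ} (hp : 1 < p) (hαp : 1 / p < α) :
    -1 < (α - 1) * (p / (p - 1)) := by
  have hp0 : 0 < p := one_pos.trans hp
  have hαp' : 1 < α * p := by rwa [div_lt_iff₀ hp0] at hαp
  have : 0 < (α - 1) * (p / (p - 1)) + 1 := by
    rw [sub_one_mul_conjExponent_add_one hp]
    exact div_pos (by linarith) (by linarith)
  linarith

theorem integral_abs_kernel_rpow_conj_le {p α : ℝ} (hp : 1 < p) (hαp : 1 / p < α) (hα1 : α ≤ 1)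
    (ht₁ : 0 ≤ t₁) (h12 : t₁ ≤ t₂) :
    (∫ s in Ioo 0 t₁, |(t₁ - s) ^ (α - 1) - (t₂ - s) ^ (α - 1)| ^ (p / (p - 1))) ^ (1 - 1 / p)
      ≤ ((p - 1) / (α * p - 1)) ^ (1 - 1 / p) * (t₂ - t₁) ^ (α - 1 / p) := by
  have hp0 : 0 < p := one_pos.trans hp
  have hp1 : p - 1 ≠ 0 := (sub_pos.2 hp).ne'
  have hexp : (α * p - 1) / (p - 1) * (1 - 1 / p) = α - 1 / p := by
    field_simp
  have hq : 1 ≤ p / (p - 1) := (Real.HolderConjugate.conjExponent hp).symm.lt.le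
  have hm0 := neg_one_lt_sub_one_mul_conjExponent hp hαp
  calc _ ≤ ((t₂ - t₁) ^ ((α - 1) * (p / (p - 1)) + 1) / ((α - 1) * (p / (p - 1)) + 1))
        ^ (1 - 1 / p) := by
        gcongr
        · rw [sub_nonneg, div_le_one hp0]; exact hp.le
        · exact integral_abs_kernel_rpow_le (by linarith) hq hm0 ht₁ h12
    _ = _ := by
        rw [div_eq_mul_inv, Real.mul_rpow (by positivity) (inv_nonneg.2 (by linarith)),
          ← Real.rpow_mul (by linarith), sub_one_mul_conjExponent_add_one hp, hexp, inv_div,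
          mul_comm]

end Kernel

theorem stmt_0_general (T p α : ℝ) (hp : 1 < p) (hαp : 1 / p < α) (hα1 : α < 1)
    (v : ℝ → ℝ)
    (hv : MeasureTheory.MemLp v (ENNReal.ofReal p) (volume.restrict (Set.Ioc 0 T)))
    (t₁ t₂ : ℝ) (ht₁ : 0 < t₁) (h12 : t₁ < t₂) (h2T : t₂ ≤ T) :
    |(1 / Real.Gamma α) * ∫ s in (0:ℝ)..t₁, ((t₁ - s) ^ (α - 1) - (t₂ - s) ^ (α - 1)) * v s|
      ≤ (1 / Real.Gamma α) * ((p - 1) / (α * p - 1)) ^ (1 - 1 / p) *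
        (t₂ - t₁) ^ (α - 1 / p) * (∫ s in (0:ℝ)..t₁, |v s| ^ p) ^ (1 / p) := by
  set q := p / (p - 1)
  have hpq : p.HolderConjugate q := .conjExponent hp
  have hinvq : 1 / q = 1 - 1 / p := by linarith [hpq.one_div_add_one_div]
  have hKLq := memLp_kernel (t₂ := t₂) (by linarith : α - 1 ≤ 0) hpq.symm.lt.le
    (neg_one_lt_sub_one_mul_conjExponent hp hαp) ht₁.le h12.le
  have hvLp : MemLp v (ENNReal.ofReal p) (volume.restrict (Ioo 0 t₁)) :=
    hv.mono_measure (Measure.restrict_mono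
      (Ioo_subset_Ioc_self.trans (Ioc_subset_Ioc_right (h12.le.trans h2T))) le_rfl)
  have hΓ : 0 < 1 / Real.Gamma α :=
    one_div_pos.2 (Real.Gamma_pos_of_pos ((one_div_pos.2 hpq.pos).trans hαp))
  simp only [intervalIntegral.integral_of_le ht₁.le, integral_Ioc_eq_integral_Ioo]
  calc |1 / Real.Gamma α * ∫ s in Ioo 0 t₁, ((t₁ - s) ^ (α - 1) - (t₂ - s) ^ (α - 1)) * v s|
      ≤ 1 / Real.Gamma α *
          ((∫ s in Ioo 0 t₁, |(t₁ - s) ^ (α - 1) - (t₂ - s) ^ (α - 1)| ^ q) ^ (1 - 1 / p) *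
            (∫ s in Ioo 0 t₁, |v s| ^ p) ^ (1 / p)) := by
        rw [abs_mul, abs_of_pos hΓ, ← hinvq]
        gcongr
        exact abs_integral_mul_le_Lp_mul_Lq hpq.symm hKLq hvLp
    _ ≤ 1 / Real.Gamma α * (((p - 1) / (α * p - 1)) ^ (1 - 1 / p) * (t₂ - t₁) ^ (α - 1 / p) *
          (∫ s in Ioo 0 t₁, |v s| ^ p) ^ (1 / p)) := by
        gcongr
        exact integral_abs_kernel_rpow_conj_le hp hαp hα1.le ht₁.le h12.le
    _ = _ := by ring

theorem stmt_0 (T p α : ℝ) (hT : 0 < T) (hp : 1 < p) (hαp : 1 / p < α) (hα1 : α < 1)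
    (v : ℝ → ℝ)
    (hv : MeasureTheory.MemLp v (ENNReal.ofReal p) (volume.restrict (Set.Ioc 0 T)))
    (t₁ t₂ : ℝ) (ht₁ : 0 < t₁) (h12 : t₁ < t₂) (h2T : t₂ ≤ T) :
    |(1 / Real.Gamma α) * ∫ s in (0:ℝ)..t₁, ((t₁ - s) ^ (α - 1) - (t₂ - s) ^ (α - 1)) * v s|
      ≤ (1 / Real.Gamma α) * ((p - 1) / (α * p - 1)) ^ (1 - 1 / p) *
        (t₂ - t₁) ^ (α - 1 / p) * (∫ s in (0:ℝ)..t₁, |v s| ^ p) ^ (1 / p) :=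
  stmt_0_general T p α hp hαp hα1 v hv t₁ t₂ ht₁ h12 h2T
end

section
/- Let T=1, α∈(0,1), p∈[1,∞). The function v(t) = (1−t)^{−α/p} [log(e/(1−t))]^{−1/p} on (0,1) belongs to L^{p/α}(0,1) but ∫₀^1 (1−s)^{α−1}|v(s)|^p ds = +∞, i.e., v ∉ L^p_α(0,1). -/
open MeasureTheory Set

/-- Change of variables setup: the map `u ↦ 1 - exp (1 - u)` sends `Ioi 1` to `Ioo 0 1`. -/
lemma aux_image : (fun u : ℝ => 1 - Real.exp (1 - u)) '' (Set.Ioi 1) = Set.Ioo (0:ℝ) 1 := by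
  ext s
  constructor
  · rintro ⟨u, hu, rfl⟩
    rw [Set.mem_Ioi] at hu
    have h1 : Real.exp (1 - u) < 1 := Real.exp_lt_one_iff.mpr (by linarith)
    have h2 : 0 < Real.exp (1 - u) := Real.exp_pos _
    exact ⟨by show 0 < 1 - Real.exp (1-u); linarith, by show 1 - Real.exp (1-u) < 1; linarith⟩
  · rintro ⟨hs0, hs1⟩
    refine ⟨1 - Real.log (1 - s), ?_, ?_⟩
    · have : Real.log (1 - s) < 0 := Real.log_neg (by linarith) (by linarith)
      simpa using by linarith
    · have : Real.exp (1 - (1 - Real.log (1 - s))) = 1 - s := by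
        rw [show (1 : ℝ) - (1 - Real.log (1 - s)) = Real.log (1 - s) by ring,
          Real.exp_log (by linarith)]
      show 1 - Real.exp (1 - (1 - Real.log (1 - s))) = s
      rw [this]; ring

lemma aux_deriv (u : ℝ) :
    HasDerivAt (fun u : ℝ => 1 - Real.exp (1 - u)) (Real.exp (1 - u)) u := by
  have h1 : HasDerivAt (fun u : ℝ => 1 - u) (-1) u := (hasDerivAt_id u).const_sub 1
  have h2 : HasDerivAt (fun u : ℝ => Real.exp (1 - u)) (Real.exp (1 - u) * (-1)) u :=
    (Real.hasDerivAt_exp _).comp u h1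
  have h3 := h2.const_sub 1
  simpa using h3

lemma aux_inj : Set.InjOn (fun u : ℝ => 1 - Real.exp (1 - u)) (Set.Ioi 1) := by
  intro a _ b _ h
  simp only [sub_right_inj, Real.exp_eq_exp] at h
  linarith

/-- After substitution, both integrability questions reduce to power functions on `Ioi 1`. -/
lemma aux_key (r : ℝ) :
    IntegrableOn (fun s : ℝ => (1 - s) ^ (-1 : ℝ) * (1 - Real.log (1 - s)) ^ r)
      (Set.Ioo (0:ℝ) 1) ↔ IntegrableOn (fun u : ℝ => u ^ r) (Set.Ioi (1:ℝ)) := by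
  rw [← aux_image,
    integrableOn_image_iff_integrableOn_abs_deriv_smul measurableSet_Ioi
      (fun u _ => (aux_deriv u).hasDerivWithinAt) aux_inj]
  apply integrableOn_congr_fun _ measurableSet_Ioi
  intro u hu
  rw [Set.mem_Ioi] at hu
  have he : 0 < Real.exp (1 - u) := Real.exp_pos _
  have h1 : (1 : ℝ) - (1 - Real.exp (1 - u)) = Real.exp (1 - u) := by ring
  have h2 : 1 - Real.log (1 - (1 - Real.exp (1 - u))) = u := by
    rw [h1, Real.log_exp]; ring
  show |Real.exp (1 - u)| •
      ((1 - (1 - Real.exp (1 - u))) ^ (-1 : ℝ) * (1 - Real.log (1 - (1 - Real.exp (1 - u)))) ^ r)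
    = u ^ r
  rw [smul_eq_mul, h1, Real.log_exp, show (1:ℝ) - (1 - u) = u by ring, abs_of_pos he,
    Real.rpow_neg_one, mul_inv_cancel_left₀ he.ne']

theorem stmt_7 (α p : ℝ) (hα0 : 0 < α) (hα1 : α < 1) (hp : 1 ≤ p) :
    IntegrableOn
        (fun s : ℝ =>
          |(1 - s) ^ (-(α / p)) * (Real.log (Real.exp 1 / (1 - s))) ^ (-(1 / p))| ^ (p / α))
        (Set.Ioo (0:ℝ) 1) ∧
      ¬ IntegrableOn
        (fun s : ℝ =>
          (1 - s) ^ (α - 1) *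
            |(1 - s) ^ (-(α / p)) * (Real.log (Real.exp 1 / (1 - s))) ^ (-(1 / p))| ^ p)
        (Set.Ioo (0:ℝ) 1) := by
  have hp0 : 0 < p := lt_of_lt_of_le one_pos hp
  -- pointwise facts on Ioo 0 1
  have key : ∀ s ∈ Set.Ioo (0:ℝ) 1,
      (0 < 1 - s) ∧ Real.log (Real.exp 1 / (1 - s)) = 1 - Real.log (1 - s)
        ∧ (0 < 1 - Real.log (1 - s)) := by
    rintro s ⟨hs0, hs1⟩
    have h1 : (0:ℝ) < 1 - s := by linarith
    have h2 : Real.log (1 - s) < 0 := Real.log_neg h1 (by linarith)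
    refine ⟨h1, ?_, by linarith⟩
    rw [Real.log_div (Real.exp_ne_zero 1) h1.ne', Real.log_exp]
  have habs : ∀ s ∈ Set.Ioo (0:ℝ) 1, ∀ q : ℝ,
      |(1 - s) ^ (-(α / p)) * (Real.log (Real.exp 1 / (1 - s))) ^ (-(1 / p))| ^ q
        = (1 - s) ^ (-(α / p) * q) * (1 - Real.log (1 - s)) ^ (-(1 / p) * q) := by
    intro s hs q
    obtain ⟨h1, h2, h3⟩ := key s hs
    rw [h2, abs_of_nonneg (mul_nonneg (Real.rpow_nonneg h1.le _) (Real.rpow_nonneg h3.le _)),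
      Real.mul_rpow (Real.rpow_nonneg h1.le _) (Real.rpow_nonneg h3.le _),
      ← Real.rpow_mul h1.le, ← Real.rpow_mul h3.le]
  have hα' : -(1/α) < -1 := by
    have : 1 < 1/α := by rw [lt_div_iff₀ hα0]; linarith
    linarith
  constructor
  · have heq : ∀ s ∈ Set.Ioo (0:ℝ) 1,
        |(1 - s) ^ (-(α / p)) * (Real.log (Real.exp 1 / (1 - s))) ^ (-(1 / p))| ^ (p/α)
          = (1 - s) ^ (-1 : ℝ) * (1 - Real.log (1 - s)) ^ (-(1/α)) := by
      intro s hs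
      rw [habs s hs]
      congr 2 <;> (field_simp; try ring)
    rw [integrableOn_congr_fun heq measurableSet_Ioo, aux_key]
    exact integrableOn_Ioi_rpow_of_lt hα' one_pos
  · have heq : ∀ s ∈ Set.Ioo (0:ℝ) 1,
        (1 - s) ^ (α - 1) *
            |(1 - s) ^ (-(α / p)) * (Real.log (Real.exp 1 / (1 - s))) ^ (-(1 / p))| ^ p
          = (1 - s) ^ (-1 : ℝ) * (1 - Real.log (1 - s)) ^ (-1 : ℝ) := by
      intro s hs
      obtain ⟨h1, _, _⟩ := key s hs
      rw [habs s hs, ← mul_assoc, ← Real.rpow_add h1]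
      congr 2 <;> (field_simp; try ring)
    rw [integrableOn_congr_fun heq measurableSet_Ioo, aux_key]
    intro h
    rw [integrableOn_Ioi_rpow_iff one_pos] at h
    exact lt_irrefl _ h
end

section
/- Let α∈(0,1), T>0, M≥0, C≥0 and let φ:[0,T*)→ℝ^m be continuous and locally integrable with ‖φ(t)‖ ≤ M + (C/Γ(α))∫₀^t (t−s)^{α−1}‖φ(s)‖ ds for all t∈[0,T*). Then ‖φ(t)‖ ≤ M·E_α(C t^α) for all t∈[0,T*), where E_α is the one-parameter Mittag-Leffler function; in particular φ ∈ L^∞(0,T*;ℝ^m). -/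
open MeasureTheory Set intervalIntegral
section
open Nat

lemma real_beta {u v a : ℝ} (hu : 0 < u) (hv : 0 < v) (ha : 0 < a) :
    ∫ x in (0:ℝ)..a, x ^ (u - 1) * (a - x) ^ (v - 1)
      = a ^ (u + v - 1) * (Real.Gamma u * Real.Gamma v / Real.Gamma (u + v)) := by
  have hre : 0 < ((u:ℂ)).re := by simpa using hu
  have hre' : 0 < ((v:ℂ)).re := by simpa using hv
  have hGuv : Real.Gamma (u + v) ≠ 0 := (Real.Gamma_pos_of_pos (by linarith)).ne'
  have hB : Complex.betaIntegral u v
      = (Real.Gamma u * Real.Gamma v / Real.Gamma (u + v) : ℝ) := by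
    have h := Complex.Gamma_mul_Gamma_eq_betaIntegral hre hre'
    have hc : ((u:ℂ)) + (v:ℂ) = ((u + v : ℝ) : ℂ) := by push_cast; ring
    rw [hc, Complex.Gamma_ofReal, Complex.Gamma_ofReal, Complex.Gamma_ofReal] at h
    have : Complex.betaIntegral u v
        = (Real.Gamma u : ℂ) * (Real.Gamma v : ℂ) / (Real.Gamma (u + v) : ℂ) := by
      rw [eq_div_iff (by exact_mod_cast hGuv)]
      rw [mul_comm ((Real.Gamma (u+v) : ℂ))] at h; exact h.symm
    rw [this]; push_cast; ring
  have hscaled := Complex.betaIntegral_scaled (u:ℂ) (v:ℂ) ha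
  rw [hB] at hscaled
  have hL : (∫ x in (0:ℝ)..a, ((x:ℂ)) ^ ((u:ℂ) - 1) * ((a:ℂ) - x) ^ ((v:ℂ) - 1))
      = ((∫ x in (0:ℝ)..a, x ^ (u - 1) * (a - x) ^ (v - 1) : ℝ) : ℂ) := by
    rw [← intervalIntegral.integral_ofReal]
    refine intervalIntegral.integral_congr fun x hx => ?_
    rw [uIcc_of_le ha.le] at hx
    rw [Complex.ofReal_mul, Complex.ofReal_cpow hx.1 (u-1),
      Complex.ofReal_cpow (by linarith [hx.2] : (0:ℝ) ≤ a - x) (v-1)]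
    push_cast
    rfl
  rw [hL] at hscaled
  have hR : ((a:ℂ)) ^ ((u:ℂ) + v - 1) = ((a ^ (u + v - 1) : ℝ) : ℂ) := by
    rw [Complex.ofReal_cpow ha.le]
    congr 1
    push_cast; ring
  rw [hR] at hscaled
  exact_mod_cast hscaled

lemma pow_le_const_mul_factorial {q : ℝ} (hq : 0 ≤ q) :
    ∃ A : ℝ, 1 ≤ A ∧ ∀ n : ℕ, q ^ n ≤ A * n ! := by
  have h := (Real.summable_pow_div_factorial q).tendsto_atTop_zero
  have h2 : ∀ᶠ n : ℕ in Filter.atTop, q ^ n / n ! ≤ 1 :=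
    h.eventually (eventually_le_nhds (by norm_num))
  obtain ⟨N, hN⟩ := Filter.eventually_atTop.mp h2
  refine ⟨(∑ n ∈ Finset.range N, q ^ n) + 1, ?_, ?_⟩
  · have : 0 ≤ ∑ n ∈ Finset.range N, q ^ n :=
      Finset.sum_nonneg fun n _ => pow_nonneg hq n
    linarith
  · intro n
    have hfac : (1:ℝ) ≤ n ! := by exact_mod_cast Nat.one_le_iff_ne_zero.mpr n.factorial_ne_zero
    rcases lt_or_ge n N with hn | hn
    · have h1 : q ^ n ≤ ∑ m ∈ Finset.range N, q ^ m :=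
        Finset.single_le_sum (fun m _ => pow_nonneg hq m) (Finset.mem_range.mpr hn)
      calc q ^ n ≤ (∑ m ∈ Finset.range N, q ^ m) + 1 := by linarith
        _ ≤ ((∑ m ∈ Finset.range N, q ^ m) + 1) * n ! := by
            nlinarith [Finset.sum_nonneg fun m (_ : m ∈ Finset.range N) => pow_nonneg hq m]
    · have := hN n hn
      have hfac' : (0:ℝ) < n ! := by positivity
      have hqn : q ^ n ≤ (n ! : ℝ) := by
        rw [div_le_one hfac'] at this; exact this
      nlinarith [Finset.sum_nonneg fun m (_ : m ∈ Finset.range N) => pow_nonneg hq m]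

lemma ML_summable {α : ℝ} (hα : 0 < α) {x : ℝ} (hx : 0 ≤ x) :
    Summable (fun k : ℕ => x ^ k / Real.Gamma (α * k + 1)) := by
  set q : ℝ := (2 * x + 2) ^ (α⁻¹) with hqdef
  have hq2 : (0:ℝ) < 2 * x + 2 := by linarith
  have hq0 : 0 ≤ q := Real.rpow_nonneg hq2.le _
  have hq1 : 1 ≤ q := Real.one_le_rpow (by linarith) (by positivity)
  have hqα : q ^ α = 2 * x + 2 := Real.rpow_inv_rpow hq2.le hα.ne'
  obtain ⟨A, hA1, hA⟩ := pow_le_const_mul_factorial hq0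
  set k0 : ℕ := ⌈α⁻¹⌉₊ + 1 with hk0
  have key : ∀ k : ℕ, k0 ≤ k →
      x ^ k / Real.Gamma (α * k + 1) ≤ (A * q) * (1/2) ^ k := by
    intro k hk
    have hαk : 1 ≤ α * k := by
      have h1 : (⌈α⁻¹⌉₊ : ℝ) ≥ α⁻¹ := Nat.le_ceil _
      have h2 : (k : ℝ) ≥ α⁻¹ := by
        have : (k0 : ℝ) ≤ k := by exact_mod_cast hk
        push_cast [hk0] at this
        linarith
      calc (1:ℝ) = α * α⁻¹ := by field_simp
        _ ≤ α * k := by nlinarith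
    set n : ℕ := ⌊α * k⌋₊ with hn
    have hn1 : 1 ≤ n := Nat.le_floor (by exact_mod_cast hαk)
    have hfl : (n : ℝ) ≤ α * k := Nat.floor_le (by linarith)
    have hfl2 : α * k ≤ n + 1 := (Nat.lt_floor_add_one _).le
    have hGam : ((n ! : ℕ) : ℝ) ≤ Real.Gamma (α * k + 1) := by
      rw [← Real.Gamma_nat_eq_factorial]
      refine Real.Gamma_strictMonoOn_Ici.monotoneOn ?_ ?_ (by push_cast; linarith)
      · simp only [mem_Ici]; push_cast; exact_mod_cast by linarith [hn1]
      · simp only [mem_Ici]; linarith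
    have hGpos : (0:ℝ) < Real.Gamma (α * k + 1) :=
      Real.Gamma_pos_of_pos (by linarith)
    have hnfac : (0:ℝ) < (n ! : ℝ) := by positivity
    have step1 : x ^ k / Real.Gamma (α * k + 1) ≤ x ^ k / n ! :=
      div_le_div_of_nonneg_left (pow_nonneg hx k) hnfac hGam |>.trans_eq rfl
    have hqn : q ^ (α * k - 1) ≤ q ^ (n : ℝ) :=
      Real.rpow_le_rpow_of_exponent_le hq1 (by linarith)
    have hqnn : (q : ℝ) ^ n = q ^ (n : ℝ) := (Real.rpow_natCast q n).symm
    have step2 : x ^ k / (n ! : ℝ) ≤ A * x ^ k / q ^ (α * k - 1) := by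
      have h1 : q ^ n ≤ A * n ! := hA n
      have hqpos : (0:ℝ) < q ^ (α * k - 1) := Real.rpow_pos_of_pos (by linarith) _
      rw [div_le_div_iff₀ hnfac hqpos]
      calc x ^ k * q ^ (α * k - 1) ≤ x ^ k * q ^ (n:ℝ) := by
            exact mul_le_mul_of_nonneg_left hqn (pow_nonneg hx k)
        _ = x ^ k * q ^ n := by rw [hqnn]
        _ ≤ x ^ k * (A * n !) := mul_le_mul_of_nonneg_left h1 (pow_nonneg hx k)
        _ = A * x ^ k * n ! := by ring
    have hqak : q ^ (α * k - 1) = (2 * x + 2) ^ k / q := by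
      rw [Real.rpow_sub (lt_of_lt_of_le one_pos hq1), Real.rpow_one]
      congr 1
      rw [Real.rpow_mul hq0, hqα, Real.rpow_natCast]
    have step3 : A * x ^ k / q ^ (α * k - 1) ≤ (A * q) * (1/2) ^ k := by
      rw [hqak]
      have hqpos : (0:ℝ) < q := lt_of_lt_of_le one_pos hq1
      rw [div_div_eq_mul_div, div_le_iff₀ (by positivity)]
      have hx2 : x ^ k ≤ (x + 1) ^ k := pow_le_pow_left₀ hx (by linarith) k
      have : (1/2 : ℝ) ^ k * (2 * x + 2) ^ k = (x + 1) ^ k := by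
        rw [← mul_pow]; congr 1; ring
      calc A * x ^ k * q ≤ A * (x+1) ^ k * q := by nlinarith [pow_nonneg hx k, (by positivity : (0:ℝ) ≤ A * q)]
        _ = A * q * ((1/2) ^ k * (2 * x + 2) ^ k) := by rw [this]; ring
        _ = A * q * (1/2) ^ k * (2 * x + 2) ^ k := by ring
    exact step1.trans (step2.trans step3)
  rw [← summable_nat_add_iff k0]
  refine Summable.of_nonneg_of_le (fun j => by positivity) (fun j => ?_)
    (((summable_geometric_of_lt_one (r := (1/2:ℝ)) (by norm_num) (by norm_num)).mul_left (A * q)))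
  have h1 := key (j + k0) (by omega)
  refine h1.trans ?_
  have : ((1:ℝ)/2) ^ (j + k0) ≤ (1/2) ^ j := by
    apply pow_le_pow_of_le_one (by norm_num) (by norm_num) (by omega)
  have hAq : (0:ℝ) ≤ A * q := by positivity
  exact mul_le_mul_of_nonneg_left this hAq

lemma frac_int {α β t : ℝ} (hα : 0 < α) (hβ : 0 ≤ β) (ht : 0 < t) :
    ∫ s in (0:ℝ)..t, (t - s) ^ (α - 1) * s ^ β
      = t ^ (β + α) * (Real.Gamma (β + 1) * Real.Gamma α / Real.Gamma (β + 1 + α)) := by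
  have h := real_beta (u := β + 1) (v := α) (a := t) (by linarith) hα ht
  rw [show β + 1 - 1 = β by ring, show β + 1 + α - 1 = β + α by ring] at h
  rw [← h]
  exact intervalIntegral.integral_congr fun x _ => mul_comm _ _

lemma wint {α t : ℝ} (hα : 0 < α) (ht : 0 ≤ t) {g : ℝ → ℝ}
    (hg : ContinuousOn g (Icc 0 t)) :
    IntervalIntegrable (fun s => (t - s) ^ (α - 1) * g s) volume 0 t := by
  have h1 : IntervalIntegrable (fun x : ℝ => x ^ (α - 1)) volume 0 t :=
    intervalIntegral.intervalIntegrable_rpow' (by linarith)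
  have h2 : IntervalIntegrable (fun x : ℝ => (t - x) ^ (α - 1)) volume 0 t := by
    simpa using (h1.comp_sub_left t).symm
  refine h2.mul_continuousOn ?_
  rwa [uIcc_of_le ht]

lemma step_int {α C : ℝ} (hα0 : 0 < α) (hC : 0 ≤ C) {t : ℝ} (ht : 0 < t) (k : ℕ) :
    (C / Real.Gamma α) *
        ∫ s in (0:ℝ)..t, (t - s) ^ (α - 1) * ((C * s ^ α) ^ k / Real.Gamma (α * k + 1))
      = (C * t ^ α) ^ (k + 1) / Real.Gamma (α * (k + 1 : ℕ) + 1) := by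
  have hGα : 0 < Real.Gamma α := Real.Gamma_pos_of_pos hα0
  have hβ : (0:ℝ) ≤ α * k := by positivity
  have hGk : 0 < Real.Gamma (α * k + 1) := Real.Gamma_pos_of_pos (by linarith)
  have hGk1 : 0 < Real.Gamma (α * k + 1 + α) := Real.Gamma_pos_of_pos (by linarith)
  have hcongr : ∫ s in (0:ℝ)..t, (t - s) ^ (α - 1) * ((C * s ^ α) ^ k / Real.Gamma (α * k + 1))
      = (C ^ k / Real.Gamma (α * k + 1)) * ∫ s in (0:ℝ)..t, (t - s) ^ (α - 1) * s ^ (α * k) := by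
    rw [← intervalIntegral.integral_const_mul]
    refine intervalIntegral.integral_congr fun s hs => ?_
    rw [uIcc_of_le ht.le] at hs
    have hs0 : (0:ℝ) ≤ s := hs.1
    have : (C * s ^ α) ^ k = C ^ k * s ^ (α * k) := by
      rw [mul_pow, ← Real.rpow_natCast (s ^ α) k, ← Real.rpow_mul hs0]
    rw [this]; ring
  rw [hcongr, frac_int hα0 hβ ht]
  have harg : α * ((k:ℕ) + 1 : ℕ) + 1 = α * k + 1 + α := by push_cast; ring
  rw [harg]
  have hpow : t ^ (α * k + α) = (t ^ α) ^ (k + 1) := by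
    rw [← Real.rpow_natCast (t ^ α) (k + 1), ← Real.rpow_mul ht.le]
    congr 1; push_cast; ring
  have harg2 : α * (k:ℝ) + 1 + α = α * k + α + 1 := by ring
  rw [harg2] at hGk1 ⊢
  rw [mul_pow, ← hpow]
  field_simp
  ring

end

theorem stmt_15 (α τ M C : ℝ) (hα0 : 0 < α) (hα1 : α < 1) (hτ : 0 < τ)
    (hM : 0 ≤ M) (hC : 0 ≤ C)
    (m : ℕ) (φ : ℝ → EuclideanSpace ℝ (Fin m))
    (hφcont : ContinuousOn φ (Set.Ico 0 τ))
    (hbound : ∀ t ∈ Set.Ico (0:ℝ) τ,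
      ‖φ t‖ ≤ M + (C / Real.Gamma α) * ∫ s in (0:ℝ)..t, (t - s) ^ (α - 1) * ‖φ s‖) :
    (∀ t ∈ Set.Ico (0:ℝ) τ,
        ‖φ t‖ ≤ M * ∑' k : ℕ, (C * t ^ α) ^ k / Real.Gamma (α * k + 1)) ∧
      ∃ B : ℝ, ∀ t ∈ Set.Ico (0:ℝ) τ, ‖φ t‖ ≤ B := by
  have hGα : 0 < Real.Gamma α := Real.Gamma_pos_of_pos hα0
  set E : ℕ → ℝ → ℝ := fun k s => (C * s ^ α) ^ k / Real.Gamma (α * k + 1) with hE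
  have hGk : ∀ k : ℕ, 0 < Real.Gamma (α * k + 1) := fun k =>
    Real.Gamma_pos_of_pos (by positivity)
  have hrpow_cont : Continuous fun s : ℝ => s ^ α := by
    rw [continuous_iff_continuousAt]
    exact fun x => Real.continuousAt_rpow_const x α (Or.inr hα0.le)
  have hEcont : ∀ k, Continuous (E k) := fun k =>
    ((continuous_const.mul hrpow_cont).pow k).div_const _
  have hEnonneg : ∀ k, ∀ s : ℝ, 0 ≤ s → 0 ≤ E k s := by
    intro k s hs
    have : 0 ≤ C * s ^ α := mul_nonneg hC (Real.rpow_nonneg hs α)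
    exact div_nonneg (pow_nonneg this k) (hGk k).le
  have hE0 : ∀ s : ℝ, E 0 s = 1 := by
    intro s; simp [hE, Real.Gamma_one]
  have hEsummable : ∀ s : ℝ, 0 ≤ s → Summable fun k => E k s := by
    intro s hs
    exact ML_summable hα0 (mul_nonneg hC (Real.rpow_nonneg hs α))
  have main : ∀ t ∈ Set.Ico (0:ℝ) τ, ‖φ t‖ ≤ M * ∑' k : ℕ, E k t := by
    intro t0 ht0
    -- max of ‖φ‖ on [0, t0]
    have hsub : Icc (0:ℝ) t0 ⊆ Ico 0 τ := fun s hs => ⟨hs.1, lt_of_le_of_lt hs.2 ht0.2⟩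
    have hcont : ContinuousOn (fun s => ‖φ s‖) (Icc 0 t0) := (hφcont.mono hsub).norm
    obtain ⟨z, hz, hzmax⟩ := isCompact_Icc.exists_isMaxOn
      (nonempty_Icc.mpr ht0.1) hcont
    set K : ℝ := ‖φ z‖ with hK
    have hK0 : 0 ≤ K := norm_nonneg _
    have hKmax : ∀ s ∈ Icc (0:ℝ) t0, ‖φ s‖ ≤ K := fun s hs => hzmax hs
    -- induction
    have ind : ∀ n : ℕ, ∀ s ∈ Icc (0:ℝ) t0,
        ‖φ s‖ ≤ M * ∑ k ∈ Finset.range n, E k s + K * E n s := by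
      intro n
      induction n with
      | zero =>
        intro s hs
        simpa [hE0 s] using hKmax s hs
      | succ n ih =>
        intro s hs
        rcases eq_or_lt_of_le hs.1 with hs0 | hs0
        · -- s = 0
          subst hs0
          have h00 : ‖φ 0‖ ≤ M := by
            have := hbound 0 ⟨le_refl 0, hτ⟩
            simpa using this
          have hEzero : ∀ k : ℕ, E (k + 1) (0:ℝ) = 0 := by
            intro k
            simp [hE, Real.zero_rpow hα0.ne']
          have hsum1 : ∑ k ∈ Finset.range (n + 1), E k (0:ℝ) = 1 := by
            rw [Finset.sum_range_succ' (fun k => E k (0:ℝ)) n, hE0]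
            simp [hEzero]
          rw [hsum1, hEzero n]
          calc ‖φ 0‖ ≤ M := h00
            _ ≤ M * 1 + K * 0 := by linarith
        · -- 0 < s
          have hsτ : s ∈ Ico (0:ℝ) τ := hsub hs
          have hb := hbound s hsτ
          set v : ℝ → ℝ := fun r => M * ∑ k ∈ Finset.range n, E k r + K * E n r with hv
          have hvcont : Continuous v := by
            apply Continuous.add
            · exact continuous_const.mul (continuous_finset_sum _ fun k _ => hEcont k)
            · exact continuous_const.mul (hEcont n)
          have hwu : IntervalIntegrable (fun r => (s - r) ^ (α - 1) * ‖φ r‖) volume 0 s :=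
            wint hα0 hs0.le (hcont.mono (Icc_subset_Icc_right hs.2))
          have hwv : IntervalIntegrable (fun r => (s - r) ^ (α - 1) * v r) volume 0 s :=
            wint hα0 hs0.le hvcont.continuousOn
          have hmono : (∫ r in (0:ℝ)..s, (s - r) ^ (α - 1) * ‖φ r‖)
              ≤ ∫ r in (0:ℝ)..s, (s - r) ^ (α - 1) * v r := by
            apply intervalIntegral.integral_mono_on hs0.le hwu hwv
            intro r hr
            have hru : ‖φ r‖ ≤ v r := ih r ⟨hr.1, le_trans hr.2 hs.2⟩
            exact mul_le_mul_of_nonneg_left hru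
              (Real.rpow_nonneg (by linarith [hr.2]) _)
          have hwE : ∀ k : ℕ,
              IntervalIntegrable (fun r => (s - r) ^ (α - 1) * E k r) volume 0 s :=
            fun k => wint hα0 hs0.le (hEcont k).continuousOn
          have hsplit : (∫ r in (0:ℝ)..s, (s - r) ^ (α - 1) * v r)
              = M * ∑ k ∈ Finset.range n, (∫ r in (0:ℝ)..s, (s - r) ^ (α - 1) * E k r)
                + K * (∫ r in (0:ℝ)..s, (s - r) ^ (α - 1) * E n r) := by
            have hScont : Continuous fun r : ℝ => ∑ k ∈ Finset.range n, E k r :=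
              continuous_finset_sum _ fun k _ => hEcont k
            have hwS : IntervalIntegrable
                (fun r => (s - r) ^ (α - 1) * ∑ k ∈ Finset.range n, E k r) volume 0 s :=
              wint hα0 hs0.le hScont.continuousOn
            have heq : (fun r => (s - r) ^ (α - 1) * v r)
                = fun r => M * ((s - r) ^ (α - 1) * ∑ k ∈ Finset.range n, E k r)
                    + K * ((s - r) ^ (α - 1) * E n r) := by
              funext r; rw [hv]; ring
            rw [heq, intervalIntegral.integral_add (hwS.const_mul M) ((hwE n).const_mul K),
              intervalIntegral.integral_const_mul, intervalIntegral.integral_const_mul]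
            congr 2
            have heq2 : (fun r => (s - r) ^ (α - 1) * ∑ k ∈ Finset.range n, E k r)
                = fun r => ∑ k ∈ Finset.range n, (s - r) ^ (α - 1) * E k r := by
              funext r; rw [Finset.mul_sum]
            rw [heq2, intervalIntegral.integral_finset_sum fun k _ => hwE k]
          have hCG : 0 ≤ C / Real.Gamma α := div_nonneg hC hGα.le
          calc ‖φ s‖ ≤ M + (C / Real.Gamma α)
                * ∫ r in (0:ℝ)..s, (s - r) ^ (α - 1) * ‖φ r‖ := hb
            _ ≤ M + (C / Real.Gamma α) * ∫ r in (0:ℝ)..s, (s - r) ^ (α - 1) * v r := by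
                gcongr
            _ = M + (M * ∑ k ∈ Finset.range n,
                  ((C / Real.Gamma α) * ∫ r in (0:ℝ)..s, (s - r) ^ (α - 1) * E k r)
                + K * ((C / Real.Gamma α) * ∫ r in (0:ℝ)..s, (s - r) ^ (α - 1) * E n r)) := by
                rw [hsplit, ← Finset.mul_sum]; ring
            _ = M + (M * ∑ k ∈ Finset.range n, E (k+1) s + K * E (n+1) s) := by
                congr 1
                congr 1
                · congr 1
                  exact Finset.sum_congr rfl fun k _ => step_int hα0 hC hs0 k
                · rw [step_int hα0 hC hs0 n]
            _ = M * ∑ k ∈ Finset.range (n+1), E k s + K * E (n+1) s := by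
                rw [Finset.sum_range_succ' (fun k => E k s) n, hE0 s]; ring
    -- take the limit
    have hsum := hEsummable t0 ht0.1
    have hterm : ∀ n : ℕ, ‖φ t0‖ ≤ M * ∑' k, E k t0 + K * E n t0 := by
      intro n
      refine (ind n t0 ⟨ht0.1, le_refl _⟩).trans ?_
      gcongr
      exact Summable.sum_le_tsum (Finset.range n) (fun k _ => hEnonneg k t0 ht0.1) hsum
    have hlim : Filter.Tendsto (fun n => M * ∑' k, E k t0 + K * E n t0)
        Filter.atTop (nhds (M * ∑' k, E k t0)) := by
      have h0 : Filter.Tendsto (fun n => E n t0) Filter.atTop (nhds 0) :=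
        hsum.tendsto_atTop_zero
      have := (h0.const_mul K).const_add (M * ∑' k, E k t0)
      simpa using this
    exact ge_of_tendsto' hlim hterm
  refine ⟨main, ⟨M * ∑' k : ℕ, E k τ, fun t ht => ?_⟩⟩
  refine (main t ht).trans (mul_le_mul_of_nonneg_left ?_ hM)
  refine Summable.tsum_le_tsum (fun k => ?_) (hEsummable t ht.1) (hEsummable τ hτ.le)
  have h1 : C * t ^ α ≤ C * τ ^ α :=
    mul_le_mul_of_nonneg_left (Real.rpow_le_rpow ht.1 ht.2.le hα0.le) hC
  have h2 : 0 ≤ C * t ^ α := mul_nonneg hC (Real.rpow_nonneg ht.1 α)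
  exact (div_le_div_iff_of_pos_right (hGk k)).mpr (pow_le_pow_left₀ h2 h1 k)
end
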